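/- arXiv:1604.03448 — 2 statements merged into one kernel-verified Lean document; each statement's English description precedes it below -/
import Mathlib

section
/- Convex-decomposition bound for the max-relative entropy of entanglement: Let k ∈ ℕ, let ρ^1_{AB}, …, ρ^k_{AB} be density matrices on ℂ^{d_A} ⊗ ℂ^{d_B}, let p_1, …, p_k ∈ [0,1] with Σ_i p_i = 1, and set ρ_{AB} = Σ_i p_i ρ^i_{AB}. Then Σ_{i=1}^k p_i · E_max^{A:B}(ρ^i_{AB}) ≤ E_max^{A:B}(ρ_{AB}) + Σ_{i=1}^k p_i · D_max(ρ^i_{AB}‖ρ_{AB}). -/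
open Matrix
open scoped Kronecker ComplexOrder
attribute [local instance] Classical.propDecidable

noncomputable section

/-- Real power of a Hermitian matrix via the continuous functional calculus
(with the Moore–Penrose convention `0 ^ r = 0` for `r ≠ 0`). -/
def matRPow {n : Type*} [Fintype n] [DecidableEq n] (A : Matrix n n ℂ) (r : ℝ) :
    Matrix n n ℂ :=
  cfc (fun x : ℝ => x ^ r) A

/-- Base-2 matrix logarithm via the continuous functional calculus. -/
def matLog2 {n : Type*} [Fintype n] [DecidableEq n] (A : Matrix n n ℂ) : Matrix n n ℂ :=
  cfc (fun x : ℝ => Real.logb 2 x) A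

/-- A density matrix: positive semidefinite with unit trace. -/
def IsState {n : Type*} [Fintype n] (ρ : Matrix n n ℂ) : Prop :=
  ρ.PosSemidef ∧ ρ.trace = 1

/-- The sandwiched α-Rényi divergence
`D_α(ρ‖σ) = (α−1)⁻¹ · log₂ tr[(σ^((1−α)/(2α)) ρ σ^((1−α)/(2α)))^α]`. -/
def sandwichedRenyi {n : Type*} [Fintype n] [DecidableEq n] (α : ℝ) (ρ σ : Matrix n n ℂ) : ℝ :=
  (α - 1)⁻¹ *
    Real.logb 2
      (matRPow (matRPow σ ((1 - α) / (2 * α)) * ρ * matRPow σ ((1 - α) / (2 * α))) α).trace.re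

/-- The Umegaki relative entropy `D(ρ‖σ) = tr[ρ log₂ ρ] − tr[ρ log₂ σ]`. -/
def relEnt {n : Type*} [Fintype n] [DecidableEq n] (ρ σ : Matrix n n ℂ) : ℝ :=
  ((ρ * matLog2 ρ).trace - (ρ * matLog2 σ).trace).re

/-- The max-relative entropy `D_max(ρ‖σ) = log₂ inf{c > 0 : c·σ − ρ ⪰ 0}` (with value `⊤`
if no such `c` exists). -/
def Dmax {n : Type*} [Fintype n] (ρ σ : Matrix n n ℂ) : EReal :=
  ⨅ c : {c : ℝ // 0 < c ∧ ((c : ℝ) • σ - ρ).PosSemidef}, ((Real.logb 2 (c : ℝ) : ℝ) : EReal)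

/-- Support inclusion for positive semidefinite matrices, expressed as domination:
`supp ρ ⊆ supp σ` iff `ρ ≤ c·σ` for some `c > 0`. -/
def supportLe {n : Type*} [Fintype n] (ρ σ : Matrix n n ℂ) : Prop :=
  ∃ c : ℝ, 0 < c ∧ ((c : ℝ) • σ - ρ).PosSemidef

/-- Extended-real-valued sandwiched α-Rényi divergence, `⊤` if the support condition fails. -/
def DalphaE {n : Type*} [Fintype n] [DecidableEq n] (α : ℝ) (ρ σ : Matrix n n ℂ) : EReal :=
  if supportLe ρ σ then ((sandwichedRenyi α ρ σ : ℝ) : EReal) else ⊤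

/-- Extended-real-valued Umegaki relative entropy, `⊤` if the support condition fails. -/
def DrelE {n : Type*} [Fintype n] [DecidableEq n] (ρ σ : Matrix n n ℂ) : EReal :=
  if supportLe ρ σ then ((relEnt ρ σ : ℝ) : EReal) else ⊤

/-- Separability of a bipartite state w.r.t. the bipartition given by the product index. -/
def IsSepState {A B : Type*} [Fintype A] [Fintype B]
    (σ : Matrix (A × B) (A × B) ℂ) : Prop :=
  ∃ (k : ℕ) (p : Fin k → ℝ) (τ₁ : Fin k → Matrix A A ℂ) (τ₂ : Fin k → Matrix B B ℂ),
    (∀ i, 0 ≤ p i) ∧ (∑ i, p i = 1) ∧ (∀ i, IsState (τ₁ i)) ∧ (∀ i, IsState (τ₂ i)) ∧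
      σ = ∑ i, (p i : ℂ) • (τ₁ i ⊗ₖ τ₂ i)

/-- The max-relative entropy of entanglement of a bipartite state. -/
def EmaxState {A B : Type*} [Fintype A] [Fintype B]
    (ρ : Matrix (A × B) (A × B) ℂ) : EReal :=
  ⨅ σ : {σ : Matrix (A × B) (A × B) ℂ // IsSepState σ}, Dmax ρ (σ : Matrix (A × B) (A × B) ℂ)

/-- The α-relative entropy of entanglement of a bipartite state. -/
def EalphaState {A B : Type*} [Fintype A] [Fintype B] [DecidableEq A] [DecidableEq B]
    (α : ℝ) (ρ : Matrix (A × B) (A × B) ℂ) : EReal :=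
  ⨅ σ : {σ : Matrix (A × B) (A × B) ℂ // IsSepState σ}, DalphaE α ρ (σ : Matrix (A × B) (A × B) ℂ)

/-- The relative entropy of entanglement of a bipartite state. -/
def ERState {A B : Type*} [Fintype A] [Fintype B] [DecidableEq A] [DecidableEq B]
    (ρ : Matrix (A × B) (A × B) ℂ) : EReal :=
  ⨅ σ : {σ : Matrix (A × B) (A × B) ℂ // IsSepState σ}, DrelE ρ (σ : Matrix (A × B) (A × B) ℂ)

/-- Partial application `id_R ⊗ T` of a map `T` to the second tensor factor. -/
def applyRight {R A B : Type*} (T : Matrix A A ℂ → Matrix B B ℂ)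
    (ρ : Matrix (R × A) (R × A) ℂ) : Matrix (R × B) (R × B) ℂ :=
  Matrix.of fun x y => T (Matrix.of fun a a' => ρ (x.1, a) (y.1, a')) x.2 y.2

/-- Partial application `id_R ⊗ T ⊗ id_S` of a map `T` to the middle tensor factor. -/
def applyMiddle {R A B S : Type*} (T : Matrix A A ℂ → Matrix B B ℂ)
    (ρ : Matrix (R × A × S) (R × A × S) ℂ) : Matrix (R × B × S) (R × B × S) ℂ :=
  Matrix.of fun x y => T (Matrix.of fun a a' => ρ (x.1, a, x.2.2) (y.1, a', y.2.2)) x.2.1 y.2.1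

/-- Regroup a tripartite index `A × (B × C)` as `(A × B) × C`. -/
def assocL {A B C : Type*} (ρ : Matrix (A × B × C) (A × B × C) ℂ) :
    Matrix ((A × B) × C) ((A × B) × C) ℂ :=
  ρ.submatrix (Equiv.prodAssoc A B C) (Equiv.prodAssoc A B C)

/-- The (normalized) Choi matrix `(id ⊗ T)(ω)` of a linear map `T`. -/
def choi {A B : Type*} [Fintype A] [DecidableEq A] (T : Matrix A A ℂ → Matrix B B ℂ) :
    Matrix (A × B) (A × B) ℂ :=
  Matrix.of fun x y => ((Fintype.card A : ℂ))⁻¹ * T (Matrix.single x.1 y.1 1) x.2 y.2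

/-- A quantum channel: linear, trace-preserving and completely positive
(the latter expressed by positive semidefiniteness of the Choi matrix). -/
def IsQChannel {A B : Type*} [Fintype A] [Fintype B] [DecidableEq A]
    (T : Matrix A A ℂ → Matrix B B ℂ) : Prop :=
  IsLinearMap ℂ T ∧ (∀ X, (T X).trace = X.trace) ∧ (choi T).PosSemidef

/-- The max-relative entropy of entanglement of a quantum channel:
`E_max(T) = sup {E_max^{R:B}((id_R ⊗ T)(ρ)) : ρ a state on R ⊗ A, dim R arbitrary}`. -/
def EmaxChan {A B : Type*} [Fintype A] [Fintype B]
    (T : Matrix A A ℂ → Matrix B B ℂ) : EReal :=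
  ⨆ (dR : ℕ) (ρ : {ρ : Matrix (Fin dR × A) (Fin dR × A) ℂ // IsState ρ}),
    EmaxState (applyRight T (ρ : Matrix (Fin dR × A) (Fin dR × A) ℂ))

/-- Partial trace over the second tensor factor. -/
def ptraceSnd {B C : Type*} [Fintype C] (M : Matrix (B × C) (B × C) ℂ) : Matrix B B ℂ :=
  Matrix.of fun b b' => ∑ c : C, M (b, c) (b', c)

/-- Partial trace over the third tensor factor. -/
def ptraceThird {A B C : Type*} [Fintype C] (ρ : Matrix (A × B × C) (A × B × C) ℂ) :
    Matrix (A × B) (A × B) ℂ :=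
  Matrix.of fun x y => ∑ c : C, ρ (x.1, x.2, c) (y.1, y.2, c)

/-- Tensoring with the identity on a third factor: `M ⊗ I_C` on `A ⊗ B ⊗ C`. -/
def tensorId3 {A B C : Type*} [DecidableEq C] [Fintype C] (M : Matrix (A × B) (A × B) ℂ) :
    Matrix (A × B × C) (A × B × C) ℂ :=
  (M ⊗ₖ (1 : Matrix C C ℂ)).submatrix (Equiv.prodAssoc A B C).symm (Equiv.prodAssoc A B C).symm

end
noncomputable section

/-- The trace norm `‖M‖₁ = tr[(M†M)^{1/2}]`. -/
def traceNorm {n : Type*} [Fintype n] [DecidableEq n] (M : Matrix n n ℂ) : ℝ :=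
  (matRPow (Mᴴ * M) (1 / 2 : ℝ)).trace.re

/-- The weighted trace norm `‖X‖_{1,τ} = tr|τ^{1/2} X τ^{1/2}|`. -/
def wnorm1 {n : Type*} [Fintype n] [DecidableEq n] (τ X : Matrix n n ℂ) : ℝ :=
  traceNorm (matRPow τ (1 / 2 : ℝ) * X * matRPow τ (1 / 2 : ℝ))

/-- The spectral (operator) norm of a matrix, as the operator norm of the induced
linear map on Euclidean space. -/
def specNorm {n : Type*} [Fintype n] [DecidableEq n] (M : Matrix n n ℂ) : ℝ :=
  ‖LinearMap.toContinuousLinearMap (Matrix.toEuclideanLin M)‖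

/-- The `d × d` quantum Fourier transform, `(U)_{jk} = e^{2πi jk/d}/√d` for `j,k ∈ {1,…,d}`. -/
def fourierMat (d : ℕ) : Matrix (Fin d) (Fin d) ℂ :=
  Matrix.of fun j k =>
    Complex.exp (2 * (Real.pi : ℂ) * Complex.I * ((((j : ℕ) : ℂ) + 1) * (((k : ℕ) : ℂ) + 1))
        / (d : ℂ)) / ((Real.sqrt d : ℝ) : ℂ)

/-- `U_1 = 1` and `U_2` the quantum Fourier transform. -/
def flowerU (d : ℕ) : Fin 2 → Matrix (Fin d) (Fin d) ℂ :=
  fun l => if l = 0 then 1 else fourierMat d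

/-- The flower state `ρ^f = (1/2d) Σ_{i,k} Σ_{j,l} ⟨k|U_l† U_j|i⟩ |ii⟩⟨kk|_{AB} ⊗ |jj⟩⟨ll|_{A'B'}`,
written on the index `(A × A') × (B × B')` (input system times output system). -/
def flowerState (d : ℕ) :
    Matrix ((Fin d × Fin 2) × (Fin d × Fin 2)) ((Fin d × Fin 2) × (Fin d × Fin 2)) ℂ :=
  Matrix.of fun x y =>
    if x.2.1 = x.1.1 ∧ x.2.2 = x.1.2 ∧ y.2.1 = y.1.1 ∧ y.2.2 = y.1.2 then
      (1 / (2 * (d : ℂ))) * (((flowerU d y.1.2)ᴴ * flowerU d x.1.2) y.1.1 x.1.1)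
    else 0

/-- `p = 1/(√d + 1)`. -/
def pparam (d : ℕ) : ℝ := 1 / (Real.sqrt d + 1)

/-- `Y = (1/d) Σ_{i,j} u_{ij} |ii⟩⟨jj|` on `ℂ^d_A ⊗ ℂ^d_B`, `u` the QFT entries. -/
def Ymat (d : ℕ) : Matrix (Fin d × Fin d) (Fin d × Fin d) ℂ :=
  Matrix.of fun x y =>
    if x.1 = x.2 ∧ y.1 = y.2 then (1 / (d : ℂ)) * fourierMat d x.1 y.1 else 0

/-- The blocks of the separable comparison Choi matrix `C_S`, indexed by the `A'B'` qubit pair. -/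
def CSblock (d : ℕ) (i j : Fin 2 × Fin 2) : Matrix (Fin d × Fin d) (Fin d × Fin d) ℂ :=
  if i = j then
    if i = (0, 1) then ((2 * pparam d : ℝ) : ℂ) • matRPow (Ymat d * (Ymat d)ᴴ) (1 / 2 : ℝ)
    else if i = (1, 0) then ((2 * pparam d : ℝ) : ℂ) • matRPow ((Ymat d)ᴴ * Ymat d) (1 / 2 : ℝ)
    else (((1 - pparam d) / (d ^ 2 : ℝ) : ℝ) : ℂ) • (1 : Matrix (Fin d × Fin d) (Fin d × Fin d) ℂ)
  else 0

/-- The separable comparison Choi matrix `C_S` on `ℂ²_{A'} ⊗ ℂ²_{B'} ⊗ ℂ^d_A ⊗ ℂ^d_B`,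
written on the index `(A' × A) × (B' × B)` grouping the bipartition `(A'A) : (B'B)`. -/
def CSmat (d : ℕ) :
    Matrix ((Fin 2 × Fin d) × (Fin 2 × Fin d)) ((Fin 2 × Fin d) × (Fin 2 × Fin d)) ℂ :=
  Matrix.of fun x y =>
    (1 / (2 * (1 + pparam d) : ℝ) : ℂ) *
      CSblock d (x.1.1, x.2.1) (y.1.1, y.2.1) (x.1.2, x.2.2) (y.1.2, y.2.2)

/-- The blocks of the matrix `M` (the partially transposed state), indexed by the `A'B'`
qubit pair. -/
def Mblock (d : ℕ) (i j : Fin 2 × Fin 2) : Matrix (Fin d × Fin d) (Fin d × Fin d) ℂ :=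
  if i = j then
    if i = (0, 1) then ((pparam d : ℝ) : ℂ) • matRPow (Ymat d * (Ymat d)ᴴ) (1 / 2 : ℝ)
    else if i = (1, 0) then ((pparam d : ℝ) : ℂ) • matRPow ((Ymat d)ᴴ * Ymat d) (1 / 2 : ℝ)
    else (((1 - pparam d) / (d ^ 2 : ℝ) : ℝ) : ℂ) • (1 : Matrix (Fin d × Fin d) (Fin d × Fin d) ℂ)
  else if i = (0, 1) ∧ j = (1, 0) then ((pparam d : ℝ) : ℂ) • Ymat d
  else if i = (1, 0) ∧ j = (0, 1) then ((pparam d : ℝ) : ℂ) • (Ymat d)ᴴ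
  else 0

/-- The matrix `M` on `ℂ²_{A'} ⊗ ℂ²_{B'} ⊗ ℂ^d_A ⊗ ℂ^d_B`, written on the index
`(A' × A) × (B' × B)`. -/
def Mmat (d : ℕ) :
    Matrix ((Fin 2 × Fin d) × (Fin 2 × Fin d)) ((Fin 2 × Fin d) × (Fin 2 × Fin d)) ℂ :=
  Matrix.of fun x y =>
    (1 / 2 : ℂ) * Mblock d (x.1.1, x.2.1) (y.1.1, y.2.1) (x.1.2, x.2.2) (y.1.2, y.2.2)

end

/-! If `ρ ≤ c₁ τ` and `τ ≤ c₂ σ` then `ρ ≤ c₁ c₂ σ`, so `D_max` satisfies the triangle inequality;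
since `E_max(ρ)` is a `D_max`-distance to the separable states, `E_max(ρⁱ) ≤ E_max(ρ) + D_max(ρⁱ‖ρ)`
for each `i`, and averaging this with the weights `pᵢ` gives the bound. -/

open Finset

lemma EReal.sum_coe_mul_of_nonneg {ι : Type*} (s : Finset ι) {p : ι → ℝ} (hp : ∀ i ∈ s, 0 ≤ p i)
    (x : EReal) : ∑ i ∈ s, (p i : EReal) * x = ((∑ i ∈ s, p i : ℝ) : EReal) * x := by
  induction s using Finset.cons_induction with
  | empty => simp
  | cons a s _ ih =>
    rw [sum_cons, sum_cons, ih fun i hi => hp i (mem_cons_of_mem hi), EReal.coe_add,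
      EReal.right_distrib_of_nonneg (EReal.coe_nonneg.mpr (hp a (mem_cons_self a s)))
        (EReal.coe_nonneg.mpr (sum_nonneg fun i hi => hp i (mem_cons_of_mem hi)))]

lemma Matrix.trace_sum_smul_eq_one {n ι : Type*} [Fintype n] [Fintype ι] {p : ι → ℝ}
    (hp : ∑ i, p i = 1) {M : ι → Matrix n n ℂ} (hM : ∀ i, (M i).trace = 1) :
    (∑ i, (p i : ℂ) • M i).trace = 1 := by
  simp [trace_sum, trace_smul, hM, ← Complex.ofReal_sum, hp]

section Dmax

variable {n : Type*} [Fintype n] {ρ σ τ : Matrix n n ℂ}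

lemma Dmax_le_logb {c : ℝ} (hc : 0 < c) (h : (c • σ - ρ).PosSemidef) :
    Dmax ρ σ ≤ (Real.logb 2 c : EReal) :=
  iInf_le (fun c : {c : ℝ // 0 < c ∧ (c • σ - ρ).PosSemidef} => (Real.logb 2 c : EReal))
    ⟨c, hc, h⟩

lemma exists_logb_lt_of_Dmax_lt {a : EReal} (h : Dmax ρ σ < a) :
    ∃ c : ℝ, 0 < c ∧ (c • σ - ρ).PosSemidef ∧ (Real.logb 2 c : EReal) < a := by
  obtain ⟨⟨c, hc, hpsd⟩, hlt⟩ := iInf_lt_iff.mp h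
  exact ⟨c, hc, hpsd, hlt⟩

lemma Dmax_nonneg (hρ : ρ.trace = 1) (hσ : σ.trace = 1) : 0 ≤ Dmax ρ σ := by
  refine le_iInf fun ⟨c, _, hpsd⟩ => ?_
  have hc : ((1 : ℝ) : ℂ) ≤ c := by simpa [trace_sub, trace_smul, hρ, hσ] using hpsd.trace_nonneg
  exact EReal.coe_nonneg.mpr (Real.logb_nonneg one_lt_two (Complex.real_le_real.mp hc))

lemma Dmax_le_add (hρτ : Dmax ρ τ ≠ ⊥) (hτσ : Dmax τ σ ≠ ⊥) :
    Dmax ρ σ ≤ Dmax ρ τ + Dmax τ σ := by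
  refine EReal.le_add_of_forall_gt (.inl hρτ) (.inr hτσ) fun a ha b hb => ?_
  obtain ⟨c₁, hc₁, h₁, hlt₁⟩ := exists_logb_lt_of_Dmax_lt ha
  obtain ⟨c₂, hc₂, h₂, hlt₂⟩ := exists_logb_lt_of_Dmax_lt hb
  have hpsd : ((c₁ * c₂) • σ - ρ).PosSemidef := by
    have hsplit : (c₁ * c₂) • σ - ρ = c₁ • (c₂ • σ - τ) + (c₁ • τ - ρ) := by
      rw [smul_sub, smul_smul]; abel
    exact hsplit ▸ (h₂.smul hc₁.le).add h₁
  calc Dmax ρ σ ≤ (Real.logb 2 (c₁ * c₂) : EReal) := Dmax_le_logb (mul_pos hc₁ hc₂) hpsd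
    _ = (Real.logb 2 c₁ : EReal) + Real.logb 2 c₂ := by
      rw [Real.logb_mul hc₁.ne' hc₂.ne', EReal.coe_add]
    _ ≤ a + b := add_le_add hlt₁.le hlt₂.le

end Dmax

section EmaxState

variable {A B : Type*} [Fintype A] [Fintype B] {ρ ρ' : Matrix (A × B) (A × B) ℂ}

lemma IsSepState.trace_eq_one (h : IsSepState ρ) : ρ.trace = 1 := by
  obtain ⟨k, p, τ₁, τ₂, -, hp, hτ₁, hτ₂, rfl⟩ := h
  exact trace_sum_smul_eq_one hp fun i => by rw [trace_kronecker, (hτ₁ i).2, (hτ₂ i).2, one_mul]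

lemma EmaxState_nonneg (hρ : ρ.trace = 1) : 0 ≤ EmaxState ρ :=
  le_iInf fun σ => Dmax_nonneg hρ σ.2.trace_eq_one

lemma EmaxState_le_add_Dmax (hρ' : ρ'.trace = 1) (hρ : ρ.trace = 1) :
    EmaxState ρ' ≤ EmaxState ρ + Dmax ρ' ρ := by
  have hD := (EReal.bot_lt_zero.trans_le (Dmax_nonneg hρ' hρ)).ne'
  have hE := (EReal.bot_lt_zero.trans_le (EmaxState_nonneg hρ)).ne'
  refine EReal.le_add_of_forall_gt (.inl hE) (.inr hD) fun a ha b hb => ?_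
  obtain ⟨σ, hσ⟩ := iInf_lt_iff.mp ha
  calc EmaxState ρ' ≤ Dmax ρ' σ := iInf_le _ σ
    _ ≤ Dmax ρ' ρ + Dmax ρ σ :=
      Dmax_le_add hD (EReal.bot_lt_zero.trans_le (Dmax_nonneg hρ σ.2.trace_eq_one)).ne'
    _ ≤ b + a := add_le_add hb.le hσ.le
    _ = a + b := add_comm b a

end EmaxState

theorem emax_convex_decomposition_general
    {dA dB : ℕ} (k : ℕ)
    (ρi : Fin k → Matrix (Fin dA × Fin dB) (Fin dA × Fin dB) ℂ)
    (hρi : ∀ i, IsState (ρi i))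
    (p : Fin k → ℝ) (hp0 : ∀ i, 0 ≤ p i) (hsum : ∑ i, p i = 1) :
    ∑ i, ((p i : ℝ) : EReal) * EmaxState (ρi i) ≤
      EmaxState (∑ i, ((p i : ℝ) : ℂ) • ρi i) +
        ∑ i, ((p i : ℝ) : EReal) * Dmax (ρi i) (∑ j, ((p j : ℝ) : ℂ) • ρi j) := by
  set ρ := ∑ i, ((p i : ℝ) : ℂ) • ρi i
  have hρ : ρ.trace = 1 := trace_sum_smul_eq_one hsum fun i => (hρi i).2
  calc ∑ i, (p i : EReal) * EmaxState (ρi i)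
      ≤ ∑ i, (p i : EReal) * (EmaxState ρ + Dmax (ρi i) ρ) :=
        sum_le_sum fun i _ => mul_le_mul_of_nonneg_left (EmaxState_le_add_Dmax (hρi i).2 hρ)
          (EReal.coe_nonneg.mpr (hp0 i))
    _ = ((∑ i, p i : ℝ) : EReal) * EmaxState ρ + ∑ i, (p i : EReal) * Dmax (ρi i) ρ := by
      simp_rw [EReal.left_distrib_of_nonneg_of_ne_top (EReal.coe_nonneg.mpr (hp0 _))
        (EReal.coe_ne_top _)]
      rw [sum_add_distrib, EReal.sum_coe_mul_of_nonneg _ fun i _ => hp0 i]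
    _ = EmaxState ρ + ∑ i, (p i : EReal) * Dmax (ρi i) ρ := by
      rw [hsum, EReal.coe_one, one_mul]

/-- **Convex-decomposition bound** for the max-relative entropy of entanglement:
`Σ p_i E_max(ρ^i) ≤ E_max(Σ p_i ρ^i) + Σ p_i D_max(ρ^i ‖ Σ p_j ρ^j)`. -/
theorem emax_convex_decomposition
    {dA dB : ℕ} (k : ℕ)
    (ρi : Fin k → Matrix (Fin dA × Fin dB) (Fin dA × Fin dB) ℂ)
    (hρi : ∀ i, IsState (ρi i))
    (p : Fin k → ℝ) (hp0 : ∀ i, 0 ≤ p i) (hp1 : ∀ i, p i ≤ 1) (hsum : ∑ i, p i = 1) :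
    ∑ i, ((p i : ℝ) : EReal) * EmaxState (ρi i) ≤
      EmaxState (∑ i, ((p i : ℝ) : ℂ) • ρi i) +
        ∑ i, ((p i : ℝ) : EReal) * Dmax (ρi i) (∑ j, ((p j : ℝ) : ℂ) • ρi j) :=
  emax_convex_decomposition_general k ρi hρi p hp0 hsum
end

section
/- Simplified upper bound via entanglement-breaking channels: Let T : M_{d_A}(ℂ) → M_{d_B}(ℂ) be a quantum channel and let S : M_{d_A}(ℂ) → M_{d_B}(ℂ) be an entanglement-breaking quantum channel, i.e. a quantum channel whose Choi matrix C_S = (id ⊗ S)(ω) is separable w.r.t. the bipartition A' : B. Then E_max(T) ≤ D_max(C_T ‖ C_S), where C_T is the Choi matrix of T. In particular E_max(T) ≤ B_max(T) := inf{D_max(C_T‖C_S) : S entanglement-breaking quantum channel from M_{d_A}(ℂ) to M_{d_B}(ℂ)}. -/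
open Matrix
open scoped Kronecker ComplexOrder
attribute [local instance] Classical.propDecidable

/-!
If `c • C_S - C_T ⪰ 0`, Choi's theorem for the linear map `c • S - T` gives
`c • (id ⊗ S)(ρ) - (id ⊗ T)(ρ) ⪰ 0` for every state `ρ`; the direction needed follows from
`(id ⊗ L)(ρ) = d • Vᴴ (ρ ⊗ C_L) V`, where `V` contracts the two copies of `A`. Hence
`D_max((id ⊗ T)(ρ) ‖ (id ⊗ S)(ρ)) ≤ log₂ c`, and it remains to see that `(id ⊗ S)(ρ)` is
separable. Writing `C_S = ∑ pᵢ τᵢ ⊗ τ'ᵢ` gives `(id ⊗ S)(ρ) = ∑ Pᵢ ⊗ τ'ᵢ` with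
`Pᵢ = d pᵢ tr_A[ρ (1 ⊗ τᵢᵀ)] ⪰ 0` (again by Choi's theorem), and since `S` preserves the trace
this normalises to a convex combination of product states.
-/

section Choi

variable {R A B : Type*} [Fintype A]

lemma trace_applyRight [Fintype R] [Fintype B] {L : Matrix A A ℂ → Matrix B B ℂ}
    (hL : ∀ X, (L X).trace = X.trace) (ρ : Matrix (R × A) (R × A) ℂ) :
    (applyRight L ρ).trace = ρ.trace := by
  simp only [trace, diag, Fintype.sum_prod_type]
  exact Finset.sum_congr rfl fun r _ => hL (of fun a a' => ρ (r, a) (r, a'))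

variable [DecidableEq A]

lemma card_mul_choi_apply (L : Matrix A A ℂ → Matrix B B ℂ) (a a' : A) (b b' : B) :
    (Fintype.card A : ℂ) * choi L (a, b) (a', b') = L (single a a' 1) b b' := by
  have : Nonempty A := ⟨a⟩
  have : (Fintype.card A : ℂ) ≠ 0 := Nat.cast_ne_zero.mpr Fintype.card_ne_zero
  simp [choi, this]

lemma applyRight_apply_eq_sum_choi (L : Matrix A A ℂ →ₗ[ℂ] Matrix B B ℂ)
    (ρ : Matrix (R × A) (R × A) ℂ) (x y : R × B) :
    applyRight L ρ x y =
      (Fintype.card A : ℂ) * ∑ a, ∑ a', ρ (x.1, a) (y.1, a') * choi L (a, x.2) (a', y.2) := by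
  conv_lhs => rw [applyRight, of_apply, matrix_eq_sum_single (of fun a a' => ρ (x.1, a) (y.1, a'))]
  simp only [map_sum, Matrix.sum_apply, Finset.mul_sum]
  refine Finset.sum_congr rfl fun a _ => Finset.sum_congr rfl fun a' _ => ?_
  rw [show single a a' (of (fun a a' => ρ (x.1, a) (y.1, a')) a a') =
      ρ (x.1, a) (y.1, a') • single a a' 1 by simp, map_smul, Matrix.smul_apply, smul_eq_mul,
    ← card_mul_choi_apply (⇑L)]
  ring

noncomputable def diagContraction (R A B : Type*) : Matrix ((R × A) × (A × B)) (R × B) ℂ :=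
  of fun u x => if u.1.1 = x.1 ∧ u.2.2 = x.2 ∧ u.1.2 = u.2.1 then 1 else 0

lemma applyRight_eq_smul_conjTranspose_mul_kronecker_mul [Fintype R] [Fintype B]
    (L : Matrix A A ℂ →ₗ[ℂ] Matrix B B ℂ) (ρ : Matrix (R × A) (R × A) ℂ) :
    applyRight L ρ = (Fintype.card A : ℂ) •
      ((diagContraction R A B)ᴴ * (ρ ⊗ₖ choi L) * diagContraction R A B) := by
  ext x y
  rw [applyRight_apply_eq_sum_choi, Matrix.smul_apply, smul_eq_mul, Finset.sum_comm]
  congr 1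
  simp [diagContraction, mul_apply, Fintype.sum_prod_type, ite_and, apply_ite (starRingEnd ℂ),
    ite_mul, mul_ite, Finset.sum_ite_irrel]

theorem Matrix.PosSemidef.applyRight [Fintype R] [Fintype B] {ρ : Matrix (R × A) (R × A) ℂ}
    (hρ : ρ.PosSemidef) {L : Matrix A A ℂ →ₗ[ℂ] Matrix B B ℂ} (hL : (choi L).PosSemidef) :
    (applyRight L ρ).PosSemidef := by
  rw [applyRight_eq_smul_conjTranspose_mul_kronecker_mul]
  exact ((hρ.kronecker hL).conjTranspose_mul_mul_same _).smul (Nat.cast_nonneg _)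

end Choi

section Separable

lemma isState_inv_card_smul_one {n : Type*} [Fintype n] [Nonempty n] :
    IsState ((Fintype.card n : ℂ)⁻¹ • (1 : Matrix n n ℂ)) := by
  refine ⟨PosSemidef.one.smul (by positivity), ?_⟩
  have : (Fintype.card n : ℂ) ≠ 0 := Nat.cast_ne_zero.mpr Fintype.card_ne_zero
  simp [this]

lemma Matrix.PosSemidef.exists_isState_eq_re_trace_smul {n : Type*} [Fintype n] [Nonempty n]
    {P : Matrix n n ℂ} (hP : P.PosSemidef) : ∃ ρ, IsState ρ ∧ P = (P.trace.re : ℂ) • ρ := by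
  have htr : (P.trace.re : ℂ) = P.trace :=
    Complex.ext rfl (by simp [(Complex.nonneg_iff.mp hP.trace_nonneg).2])
  by_cases h0 : P.trace = 0
  · exact ⟨_, isState_inv_card_smul_one, by simp [hP.trace_eq_zero_iff.mp h0]⟩
  · refine ⟨(P.trace)⁻¹ • P, ⟨hP.smul (inv_nonneg.mpr hP.trace_nonneg), by simp [h0]⟩, ?_⟩
    rw [htr, smul_smul, mul_inv_cancel₀ h0, one_smul]

lemma IsSepState.of_eq_sum_kronecker {R B : Type*} [Fintype R] [Fintype B] {k : ℕ}
    {σ : Matrix (R × B) (R × B) ℂ} {P : Fin k → Matrix R R ℂ} {τ : Fin k → Matrix B B ℂ}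
    (hP : ∀ i, (P i).PosSemidef) (hτ : ∀ i, IsState (τ i)) (hσ : σ = ∑ i, P i ⊗ₖ τ i)
    (htr : σ.trace = 1) : IsSepState σ := by
  have : Nonempty R := by
    by_contra h
    rw [not_nonempty_iff] at h
    simp [trace] at htr
  choose ρ hρ hPρ using fun i => (hP i).exists_isState_eq_re_trace_smul
  refine ⟨k, fun i => (P i).trace.re, ρ, τ,
    fun i => (Complex.nonneg_iff.mp (hP i).trace_nonneg).1, ?_, hρ, hτ, ?_⟩
  · have : ∑ i, ((P i).trace.re : ℂ) = 1 := by
      rw [← htr, hσ, trace_sum]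
      refine Finset.sum_congr rfl fun i _ => ?_
      rw [trace_kronecker, (hτ i).2, mul_one]
      conv_rhs => rw [hPρ i, trace_smul, (hρ i).2, smul_eq_mul, mul_one]
    exact_mod_cast this
  · rw [hσ]
    exact Finset.sum_congr rfl fun i _ => by rw [← smul_kronecker, ← hPρ i]

end Separable

section EntanglementBreaking

variable {R A B : Type*} [Fintype A]

noncomputable def pairingMap (τ : Matrix A A ℂ) : Matrix A A ℂ →ₗ[ℂ] Matrix Unit Unit ℂ :=
  (traceLinearMap A ℂ ℂ ∘ₗ LinearMap.mulRight ℂ τᵀ).smulRight 1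

lemma applyRight_pairingMap_apply (τ : Matrix A A ℂ) (ρ : Matrix (R × A) (R × A) ℂ)
    (x y : R × Unit) :
    applyRight (pairingMap τ) ρ x y = ∑ a, ∑ a', ρ (x.1, a) (y.1, a') * τ a a' := by
  simp [applyRight, pairingMap, trace, mul_apply]

variable [DecidableEq A]

lemma choi_pairingMap (τ : Matrix A A ℂ) :
    choi (pairingMap τ) = (Fintype.card A : ℂ)⁻¹ • τ.submatrix Prod.fst Prod.fst := by
  ext x y
  simp [choi, pairingMap, trace, mul_apply, single_apply, ite_and]

theorem IsSepState.applyRight_of_choi [Fintype R] [Fintype B]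
    {S : Matrix A A ℂ →ₗ[ℂ] Matrix B B ℂ} (hS : ∀ X, (S X).trace = X.trace)
    (hEB : IsSepState (choi S)) {ρ : Matrix (R × A) (R × A) ℂ} (hρ : IsState ρ) :
    IsSepState (applyRight S ρ) := by
  obtain ⟨k, p, τ₁, τ₂, hp, -, hτ₁, hτ₂, hC⟩ := hEB
  let P i := (Fintype.card A * p i) •
    (applyRight (pairingMap (τ₁ i)) ρ).submatrix (·, ()) (·, ())
  have hP i : (P i).PosSemidef := by
    have hchoi : (choi (pairingMap (τ₁ i))).PosSemidef := by
      rw [choi_pairingMap]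
      exact ((hτ₁ i).1.submatrix _).smul (by positivity)
    exact ((hρ.1.applyRight hchoi).submatrix _).smul (by have := hp i; positivity)
  refine .of_eq_sum_kronecker hP hτ₂ ?_ (by rw [trace_applyRight hS, hρ.2])
  ext x y
  rw [applyRight_apply_eq_sum_choi, hC]
  simp only [P, Matrix.sum_apply, kroneckerMap_apply, Matrix.smul_apply, submatrix_apply,
    applyRight_pairingMap_apply, Finset.mul_sum, Finset.sum_mul, smul_eq_mul, Complex.real_smul]
  rw [Finset.sum_congr rfl fun _ _ => Finset.sum_comm, Finset.sum_comm]
  push_cast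
  exact Finset.sum_congr rfl fun _ _ => Finset.sum_congr rfl fun _ _ =>
    Finset.sum_congr rfl fun _ _ => by ring

end EntanglementBreaking

lemma EmaxState_le_Dmax {A B : Type*} [Fintype A] [Fintype B] (ρ : Matrix (A × B) (A × B) ℂ)
    {σ : Matrix (A × B) (A × B) ℂ} (hσ : IsSepState σ) : EmaxState ρ ≤ Dmax ρ σ :=
  iInf_le_of_le ⟨σ, hσ⟩ le_rfl

lemma Dmax_applyRight_le_Dmax_choi {R A B : Type*} [Fintype R] [Fintype A] [Fintype B]
    [DecidableEq A] (T S : Matrix A A ℂ →ₗ[ℂ] Matrix B B ℂ) {ρ : Matrix (R × A) (R × A) ℂ}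
    (hρ : ρ.PosSemidef) : Dmax (applyRight T ρ) (applyRight S ρ) ≤ Dmax (choi T) (choi S) := by
  refine le_iInf fun ⟨c, hc, hcST⟩ => iInf_le_of_le ⟨c, hc, ?_⟩ le_rfl
  have hchoi : choi ((c : ℂ) • S - T) = c • choi S - choi T := by
    ext x y
    simp [choi, mul_sub, mul_left_comm]
  convert hρ.applyRight (L := (c : ℂ) • S - T) (hchoi ▸ hcST) using 1
  ext x y
  simp [applyRight]

/-- **Simplified upper bound via entanglement-breaking channels**: for any quantum channel `T`
and any entanglement-breaking quantum channel `S` (separable Choi matrix),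
`E_max(T) ≤ D_max(C_T ‖ C_S)`; in particular `E_max(T) ≤ B_max(T)`. -/
theorem emax_le_bmax
    {dA dB : ℕ}
    (T S : Matrix (Fin dA) (Fin dA) ℂ → Matrix (Fin dB) (Fin dB) ℂ)
    (hT : IsQChannel T) (hS : IsQChannel S) (hEB : IsSepState (choi S)) :
    EmaxChan T ≤ Dmax (choi T) (choi S) := by
  let T' := IsLinearMap.mk' T hT.1
  let S' := IsLinearMap.mk' S hS.1
  refine iSup₂_le fun dR ρ => ?_
  calc EmaxState (applyRight T ρ.1)
      ≤ Dmax (applyRight T ρ.1) (applyRight S ρ.1) :=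
        EmaxState_le_Dmax _ (IsSepState.applyRight_of_choi (S := S') hS.2.1 hEB ρ.2)
    _ ≤ Dmax (choi T) (choi S) := Dmax_applyRight_le_Dmax_choi T' S' ρ.2.1
end
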